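/- Let a < b be reals, let U_n be an (n+1)-dimensional subspace of C^n([a,b],ℝ) possessing a non-negative Bernstein basis p_{n,0},…,p_{n,n}, let f_0 ∈ U_n be strictly positive on [a,b], and suppose D_{f_0}U_n := { (f/f_0)′ : f ∈ U_n } possesses a positive Bernstein basis q_{n-1,0},…,q_{n-1,n-1} (each q_{n-1,k} > 0 on (a,b)). Let f_1 ∈ U_n be such that f_1/f_0 is strictly increasing on [a,b]. If there exist nodes t_{n,0} ≤ t_{n,1} ≤ ⋯ ≤ t_{n,n} in [a,b] and strictly positive weights α_{n,0},…,α_{n,n} such that the operator B_n f = Σ_{k=0}^n f(t_{n,k}) α_{n,k} p_{n,k} fixes f_0 and f_1, then (f_1/f_0)′(x) > 0 for all x ∈ (a,b). -/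

import Mathlib

open Set Filter Topology

noncomputable section

/-- `p k`, `k = 0, …, n`, is a Bernstein basis of the `(n+1)`-dimensional subspace `U` of
`C^n([a,b], ℝ)`: it is a basis of `U` and each `p k` has a zero of order `k` at `a`
(derivatives of order `< k` vanish at `a`, the `k`-th does not) and a zero of order
`n - k` at `b`. -/
def IsBernsteinBasisOf (a b : ℝ) (n : ℕ) (U : Submodule ℝ (ℝ → ℝ))
    (p : Fin (n + 1) → ℝ → ℝ) : Prop :=
  (∀ k, p k ∈ U) ∧ LinearIndependent ℝ p ∧ Submodule.span ℝ (Set.range p) = U ∧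
  ∀ k : Fin (n + 1),
    (∀ j : ℕ, j < (k : ℕ) → iteratedDeriv j (p k) a = 0) ∧
    iteratedDeriv (k : ℕ) (p k) a ≠ 0 ∧
    (∀ j : ℕ, j < n - (k : ℕ) → iteratedDeriv j (p k) b = 0) ∧
    iteratedDeriv (n - (k : ℕ)) (p k) b ≠ 0

/-- `q k`, `k = 0, …, n-1`, is a Bernstein basis of the `n`-dimensional space
`D_{f₀}U = { (f/f₀)' : f ∈ U }`: every `q k` lies in `D_{f₀}U`, every element of `D_{f₀}U`
lies in the span of the `q k`, the family is linearly independent, and each `q k` has a zero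
of order `k` at `a` and a zero of order `n - 1 - k` at `b`. -/
def IsBernsteinBasisOfD (a b : ℝ) (n : ℕ) (f₀ : ℝ → ℝ) (U : Submodule ℝ (ℝ → ℝ))
    (q : Fin n → ℝ → ℝ) : Prop :=
  (∀ k, ∃ f ∈ U, q k = deriv (fun x => f x / f₀ x)) ∧
  (∀ f ∈ U, deriv (fun x => f x / f₀ x) ∈ Submodule.span ℝ (Set.range q)) ∧
  LinearIndependent ℝ q ∧
  ∀ k : Fin n,
    (∀ j : ℕ, j < (k : ℕ) → iteratedDeriv j (q k) a = 0) ∧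
    iteratedDeriv (k : ℕ) (q k) a ≠ 0 ∧
    (∀ j : ℕ, j < n - 1 - (k : ℕ) → iteratedDeriv j (q k) b = 0) ∧
    iteratedDeriv (n - 1 - (k : ℕ)) (q k) b ≠ 0

/-!
Write `ψₖ = pₖ / f₀` and expand `ψₖ' = ∑ⱼ dₖⱼ qⱼ`. Comparing the orders of the zeros of both
sides at `a` and at `b` shows that `d` is bidiagonal, `ψₖ' = dₖ,ₖ₋₁ qₖ₋₁ + dₖₖ qₖ`, and since
`ψₖ₊₁ ≥ 0` and `qₖ > 0` near `a`, comparing leading Taylor coefficients at `a` gives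
`dₖ₊₁,ₖ > 0`. Dividing `B f₀ = f₀` by `f₀` and differentiating gives
`f₀(tⱼ) αⱼ dⱼⱼ + f₀(tⱼ₊₁) αⱼ₊₁ dⱼ₊₁,ⱼ = 0`; substituting this into the derivative of
`B f₁ / f₀ = f₁ / f₀` yields, with `g = f₁ / f₀`,
  `g' = ∑ⱼ (g(tⱼ₊₁) - g(tⱼ)) f₀(tⱼ₊₁) αⱼ₊₁ dⱼ₊₁,ⱼ qⱼ`.
Every coefficient is `≥ 0` because the nodes are ordered, and they do not all vanish: if all
nodes were equal, `B` would make `f₁` proportional to `f₀`.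

Coefficients are compared through iterated derivatives at `a` and `b`, not through the linear
independence of the `qⱼ`: identities such as `∑ₖ f₀(tₖ) αₖ ψₖ' = 0` hold only where `f₀ ≠ 0`,
since `/` returns `0` elsewhere.
-/
open scoped Matrix Nat

def HasZeroOfOrder (f : ℝ → ℝ) (k : ℕ) (x : ℝ) : Prop :=
  (∀ j < k, iteratedDeriv j f x = 0) ∧ iteratedDeriv k f x ≠ 0

theorem iteratedDeriv_mul_of_forall_lt_eq_zero {u v : ℝ → ℝ} {x : ℝ} {k : ℕ}
    (hu : ContDiffAt ℝ k u x) (hv : ContDiffAt ℝ k v x)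
    (h : ∀ j < k, iteratedDeriv j u x = 0) :
    iteratedDeriv k (u * v) x = iteratedDeriv k u x * v x := by
  rw [iteratedDeriv_mul hu hv, Finset.sum_eq_single_of_mem k (Finset.self_mem_range_succ k)]
  · simp
  · intro i hi hik
    rw [h i (by grind), mul_zero, zero_mul]

theorem iteratedDeriv_eq_iteratedDeriv_div_mul {f v : ℝ → ℝ} {x : ℝ} {k : ℕ}
    (hf : ContDiffAt ℝ k f x) (hv : ContDiffAt ℝ k v x) (hvx : v x ≠ 0)
    (h : ∀ j < k, iteratedDeriv j (fun y => f y / v y) x = 0) :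
    iteratedDeriv k f x = iteratedDeriv k (fun y => f y / v y) x * v x := by
  have hfv : f =ᶠ[𝓝 x] (fun y => f y / v y) * v := by
    filter_upwards [hv.continuousAt.eventually_ne hvx] with y hy
    simp [div_mul_cancel₀ _ hy]
  rw [hfv.iteratedDeriv_eq]
  exact iteratedDeriv_mul_of_forall_lt_eq_zero (hf.div hv hvx) hv h

theorem iteratedDeriv_div_eq_zero {f v : ℝ → ℝ} {x : ℝ} {k : ℕ}
    (hf : ContDiffAt ℝ k f x) (hv : ContDiffAt ℝ k v x) (hvx : v x ≠ 0)
    (h : ∀ j < k, iteratedDeriv j f x = 0) :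
    ∀ j < k, iteratedDeriv j (fun y => f y / v y) x = 0 := by
  intro j hj
  induction j using Nat.strong_induction_on with
  | _ j ih =>
    have hj' : (j : WithTop ℕ∞) ≤ k := by exact_mod_cast hj.le
    have := iteratedDeriv_eq_iteratedDeriv_div_mul (hf.of_le hj') (hv.of_le hj') hvx
      fun i hi => ih i hi (hi.trans hj)
    rw [h j hj] at this
    exact (mul_eq_zero.1 this.symm).resolve_right hvx

theorem HasZeroOfOrder.div {f v : ℝ → ℝ} {x : ℝ} {k : ℕ} (hzero : HasZeroOfOrder f k x)
    (hf : ContDiffAt ℝ k f x) (hv : ContDiffAt ℝ k v x) (hvx : v x ≠ 0) :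
    HasZeroOfOrder (fun y => f y / v y) k x := by
  have hvan := iteratedDeriv_div_eq_zero hf hv hvx hzero.1
  refine ⟨hvan, fun h0 => hzero.2 ?_⟩
  rw [iteratedDeriv_eq_iteratedDeriv_div_mul hf hv hvx hvan, h0, zero_mul]

theorem tendsto_div_pow_iteratedDeriv {f : ℝ → ℝ} {x : ℝ} {k : ℕ} (hf : ContDiffAt ℝ k f x)
    (h : ∀ j < k, iteratedDeriv j f x = 0) :
    Tendsto (fun y => f y / (y - x) ^ k) (𝓝[≠] x) (𝓝 (iteratedDeriv k f x / k !)) := by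
  obtain ⟨u, hu, hfu⟩ := hf.contDiffOn le_rfl (by simp)
  obtain ⟨ε, hε, hball⟩ := Metric.mem_nhds_iff.1 hu
  have hx : x ∈ Metric.ball x ε := Metric.mem_ball_self hε
  have hT := Real.taylor_tendsto (convex_ball x ε) hx (hfu.mono hball)
  rw [nhdsWithin_eq_nhds.2 (Metric.ball_mem_nhds x hε)] at hT
  have htaylor : ∀ y, taylorWithinEval f k (Metric.ball x ε) x y
      = (y - x) ^ k * (iteratedDeriv k f x / k !) := by
    intro y
    have hderiv i := iteratedDerivWithin_of_isOpen (n := i) (f := f) Metric.isOpen_ball hx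
    rw [taylor_within_apply, Finset.sum_range_succ, Finset.sum_eq_zero fun i hi => ?_]
    · rw [hderiv]; simp only [smul_eq_mul]; ring
    · rw [hderiv, h i (Finset.mem_range.1 hi), smul_zero]
  have hlim := (hT.mono_left (nhdsWithin_le_nhds (s := {x}ᶜ))).add_const
    (iteratedDeriv k f x / k !)
  rw [zero_add] at hlim
  refine hlim.congr' ?_
  filter_upwards [self_mem_nhdsWithin] with y hy
  have : (y - x) ^ k ≠ 0 := pow_ne_zero _ (sub_ne_zero.2 hy)
  rw [htaylor]
  field_simp
  ring

theorem iteratedDeriv_nonneg_of_eventually_nonneg {f : ℝ → ℝ} {x : ℝ} {k : ℕ}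
    (hf : ContDiffAt ℝ k f x) (h : ∀ j < k, iteratedDeriv j f x = 0)
    (hnn : ∀ᶠ y in 𝓝[>] x, 0 ≤ f y) : 0 ≤ iteratedDeriv k f x := by
  have hlim := (tendsto_div_pow_iteratedDeriv hf h).mono_left (nhdsGT_le_nhdsNE x)
  have : 0 ≤ iteratedDeriv k f x / k ! := by
    refine ge_of_tendsto hlim ?_
    filter_upwards [hnn, self_mem_nhdsWithin] with y hy hxy
    exact div_nonneg hy (pow_nonneg (sub_nonneg.2 (le_of_lt hxy)) k)
  rwa [le_div_iff₀ (by positivity), zero_mul] at this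

theorem HasZeroOfOrder.iteratedDeriv_pos {f : ℝ → ℝ} {x : ℝ} {k : ℕ}
    (hzero : HasZeroOfOrder f k x) (hf : ContDiffAt ℝ k f x) (hnn : ∀ᶠ y in 𝓝[>] x, 0 ≤ f y) :
    0 < iteratedDeriv k f x :=
  (iteratedDeriv_nonneg_of_eventually_nonneg hf hzero.1 hnn).lt_of_ne' hzero.2

structure HasDistinctZeroOrdersAt {ι : Type*} (q : ι → ℝ → ℝ) (o : ι → ℕ) (x : ℝ) : Prop where
  injective : Function.Injective o
  hasZeroOfOrder : ∀ j, HasZeroOfOrder (q j) (o j) x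
  contDiffAt : ∀ i j, ContDiffAt ℝ (o i) (q j) x

namespace HasDistinctZeroOrdersAt

variable {ι : Type*} [Fintype ι] {q : ι → ℝ → ℝ} {o : ι → ℕ} {x : ℝ} {c : ι → ℝ}

theorem iteratedDeriv_sum (hq : HasDistinctZeroOrdersAt q o x) {i : ι}
    (hc : ∀ j, o j < o i → c j = 0) :
    iteratedDeriv (o i) (fun y => ∑ j, c j * q j y) x = c i * iteratedDeriv (o i) (q i) x := by
  rw [iteratedDeriv_fun_sum fun j _ => contDiffAt_const.mul (hq.contDiffAt i j)]
  simp only [iteratedDeriv_const_mul_field]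
  refine Finset.sum_eq_single i (fun j _ hji => ?_) (by simp)
  rcases lt_trichotomy (o j) (o i) with hlt | heq | hgt
  · rw [hc j hlt, zero_mul]
  · exact absurd (hq.injective heq) hji
  · rw [(hq.hasZeroOfOrder j).1 _ hgt, mul_zero]

theorem coeff_eq_zero (hq : HasDistinctZeroOrdersAt q o x) {K : ℕ}
    (hS : ∀ l < K, iteratedDeriv l (fun y => ∑ j, c j * q j y) x = 0) :
    ∀ j, o j < K → c j = 0 := by
  suffices ∀ l, ∀ j, o j = l → l < K → c j = 0 from fun j => this (o j) j rfl
  intro l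
  induction l using Nat.strong_induction_on with
  | _ l ih =>
    rintro j rfl hjK
    have hsum := hq.iteratedDeriv_sum fun j' hj' => ih (o j') hj' j' rfl (hj'.trans hjK)
    rw [hS _ hjK] at hsum
    exact (mul_eq_zero.1 hsum.symm).resolve_right (hq.hasZeroOfOrder j).2

theorem coeff_eq_zero_of_eventuallyEq_zero (hq : HasDistinctZeroOrdersAt q o x)
    (hS : (fun y => ∑ j, c j * q j y) =ᶠ[𝓝 x] 0) : c = 0 := by
  funext j
  refine hq.coeff_eq_zero (K := o j + 1) (fun l _ => ?_) j (Nat.lt_succ_self _)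
  rw [hS.iteratedDeriv_eq]
  simp

theorem coeff_eq_zero_of_deriv_div {f v : ℝ → ℝ} {k : ℕ} (hq : HasDistinctZeroOrdersAt q o x)
    (hf : ContDiffAt ℝ k f x) (hv : ContDiffAt ℝ k v x) (hvx : v x ≠ 0)
    (hfx : ∀ j < k, iteratedDeriv j f x = 0)
    (hd : deriv (fun y => f y / v y) = fun y => ∑ j, c j * q j y) :
    ∀ j, o j + 1 < k → c j = 0 := by
  have hdiv := iteratedDeriv_div_eq_zero hf hv hvx hfx
  refine fun j hj => hq.coeff_eq_zero (K := k - 1) (fun l hl => ?_) j (by omega)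
  rw [← hd, ← iteratedDeriv_succ']
  exact hdiv (l + 1) (by omega)

theorem coeff_pos_of_deriv_div {f v : ℝ → ℝ} {i : ι} (hq : HasDistinctZeroOrdersAt q o x)
    (hf : ContDiffAt ℝ (o i + 1) f x) (hv : ContDiffAt ℝ (o i + 1) v x) (hvx : v x ≠ 0)
    (hfx : HasZeroOfOrder f (o i + 1) x) (hfv : ∀ᶠ y in 𝓝[>] x, 0 ≤ f y / v y)
    (hqi : ∀ᶠ y in 𝓝[>] x, 0 ≤ q i y)
    (hd : deriv (fun y => f y / v y) = fun y => ∑ j, c j * q j y) :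
    0 < c i := by
  have hlead : iteratedDeriv (o i + 1) (fun y => f y / v y) x
      = c i * iteratedDeriv (o i) (q i) x := by
    rw [iteratedDeriv_succ', hd]
    exact hq.iteratedDeriv_sum fun j hj =>
      hq.coeff_eq_zero_of_deriv_div hf hv hvx hfx.1 hd j (Nat.succ_lt_succ hj)
  have hpos := (hfx.div hf hv hvx).iteratedDeriv_pos (hf.div hv hvx) hfv
  rw [hlead] at hpos
  exact (mul_pos_iff_of_pos_right
    ((hq.hasZeroOfOrder i).iteratedDeriv_pos (hq.contDiffAt i i) hqi)).1 hpos

end HasDistinctZeroOrdersAt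

theorem deriv_div_self_eq_zero {v : ℝ → ℝ} {x : ℝ} (hv : ContinuousAt v x) (hx : v x ≠ 0) :
    deriv (fun y => v y / v y) x = 0 := by
  have hone : (fun y => v y / v y) =ᶠ[𝓝 x] fun _ => 1 := by
    filter_upwards [hv.eventually_ne hx] with y hy using div_self hy
  rw [hone.deriv_eq, deriv_const]

theorem differentiableAt_div_of_contDiff {n : ℕ} {f v : ℝ → ℝ} (hn : n ≠ 0)
    (hf : ContDiff ℝ (n : ℕ∞) f) (hv : ContDiff ℝ (n : ℕ∞) v) {x : ℝ} (hx : v x ≠ 0) :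
    DifferentiableAt ℝ (fun y => f y / v y) x :=
  (hf.contDiffAt.div hv.contDiffAt hx).differentiableAt (by exact_mod_cast hn)

theorem deriv_div_eq_sum_vecMul {ι κ : Type*} [Fintype ι] [Fintype κ] {p : κ → ℝ → ℝ}
    {q : ι → ℝ → ℝ} {d : Matrix κ ι ℝ} {F v : ℝ → ℝ} {c : κ → ℝ} {x : ℝ}
    (hF : ∀ y, ∑ k, c k * p k y = F y)
    (hp : ∀ k, DifferentiableAt ℝ (fun y => p k y / v y) x)
    (hd : ∀ k, deriv (fun y => p k y / v y) = fun y => ∑ j, d k j * q j y) :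
    deriv (fun y => F y / v y) x = ∑ j, (c ᵥ* d) j * q j x := by
  have hFv : (fun y => F y / v y) = fun y => ∑ k, c k * (p k y / v y) := by
    funext y
    simp only [← hF, Finset.sum_div, mul_div_assoc]
  rw [hFv, deriv_fun_sum fun k _ => (hp k).const_mul (c k)]
  simp only [deriv_const_mul_field', hd, Finset.mul_sum]
  rw [Finset.sum_comm]
  simp only [Matrix.vecMul, dotProduct, Finset.sum_mul, mul_assoc]

section Bidiagonal

variable {n : ℕ} {d : Matrix (Fin (n + 1)) (Fin n) ℝ}

theorem vecMul_apply_of_bidiagonal (hd : ∀ k j, k ≠ j.castSucc → k ≠ j.succ → d k j = 0)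
    (c : Fin (n + 1) → ℝ) (j : Fin n) :
    (c ᵥ* d) j = c j.castSucc * d j.castSucc j + c j.succ * d j.succ j :=
  Fintype.sum_eq_add _ _ (Fin.castSucc_lt_succ (i := j)).ne
    fun k hk => mul_eq_zero_of_right _ (hd k j hk.1 hk.2)

theorem vecMul_mul_apply_of_bidiagonal (hd : ∀ k j, k ≠ j.castSucc → k ≠ j.succ → d k j = 0)
    {c : Fin (n + 1) → ℝ} {j : Fin n} (hc : (c ᵥ* d) j = 0) (w : Fin (n + 1) → ℝ) :
    ((fun k => w k * c k) ᵥ* d) j = (w j.succ - w j.castSucc) * (c j.succ * d j.succ j) := by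
  rw [vecMul_apply_of_bidiagonal hd] at hc ⊢
  linear_combination w j.castSucc * hc

theorem deriv_ratio_eq_sum_of_bidiagonal {p : Fin (n + 1) → ℝ → ℝ} {q : Fin n → ℝ → ℝ}
    {f₀ f₁ : ℝ → ℝ} {t α : Fin (n + 1) → ℝ} {x : ℝ}
    (hd : ∀ k j, k ≠ j.castSucc → k ≠ j.succ → d k j = 0) (hf₀t : ∀ k, f₀ (t k) ≠ 0)
    (hB₁ : ∀ x, ∑ k, f₁ (t k) * α k * p k x = f₁ x)
    (hp : ∀ k, DifferentiableAt ℝ (fun y => p k y / f₀ y) x)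
    (hpq : ∀ k, deriv (fun y => p k y / f₀ y) = fun y => ∑ j, d k j * q j y)
    (hB₀d : (fun k => f₀ (t k) * α k) ᵥ* d = 0) :
    deriv (fun y => f₁ y / f₀ y) x = ∑ j,
      (f₁ (t j.succ) / f₀ (t j.succ) - f₁ (t j.castSucc) / f₀ (t j.castSucc))
        * (f₀ (t j.succ) * α j.succ * d j.succ j) * q j x := by
  have hc : (fun k => f₁ (t k) * α k) = fun k => f₁ (t k) / f₀ (t k) * (f₀ (t k) * α k) := by
    funext k
    field_simp [hf₀t k]
  rw [deriv_div_eq_sum_vecMul hB₁ hp hpq, hc]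
  simp only [vecMul_mul_apply_of_bidiagonal hd (congrFun hB₀d _)]

end Bidiagonal

theorem exists_castSucc_lt_succ {α : Type*} [LinearOrder α] {n : ℕ} {G : Fin (n + 1) → α}
    (h : G 0 < G (Fin.last n)) : ∃ j : Fin n, G j.castSucc < G j.succ := by
  by_contra! hle
  exact (Fin.antitone_iff_succ_le.2 hle (Fin.zero_le _)).not_gt h

theorem mul_eq_mul_of_nodes_eq {n : ℕ} {f₀ f₁ : ℝ → ℝ} {p : Fin (n + 1) → ℝ → ℝ}
    {t α : Fin (n + 1) → ℝ} {τ : ℝ} (hτ : ∀ k, t k = τ)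
    (hB₀ : ∀ x, ∑ k, f₀ (t k) * α k * p k x = f₀ x)
    (hB₁ : ∀ x, ∑ k, f₁ (t k) * α k * p k x = f₁ x) (x : ℝ) :
    f₁ x * f₀ τ = f₁ τ * f₀ x := by
  simp only [← hB₀ x, ← hB₁ x, hτ, mul_assoc, ← Finset.mul_sum]
  ring

theorem exists_ratio_castSucc_lt_succ {n : ℕ} {a b : ℝ} {f₀ f₁ : ℝ → ℝ}
    {p : Fin (n + 1) → ℝ → ℝ} {t α : Fin (n + 1) → ℝ} (hab : a < b)
    (hf₀pos : ∀ x ∈ Icc a b, 0 < f₀ x) (hmono : StrictMonoOn (fun x => f₁ x / f₀ x) (Icc a b))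
    (ht : Monotone t) (htmem : ∀ k, t k ∈ Icc a b)
    (hB₀ : ∀ x, ∑ k, f₀ (t k) * α k * p k x = f₀ x)
    (hB₁ : ∀ x, ∑ k, f₁ (t k) * α k * p k x = f₁ x) :
    ∃ j : Fin n, f₁ (t j.castSucc) / f₀ (t j.castSucc) < f₁ (t j.succ) / f₀ (t j.succ) := by
  have hlt : t 0 < t (Fin.last n) := by
    refine (ht (Fin.zero_le _)).lt_of_ne fun h0 => ?_
    have hτ k : t k = t 0 := le_antisymm (h0 ▸ ht (Fin.le_last k)) (ht (Fin.zero_le k))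
    have hratio : ∀ x ∈ Icc a b, f₁ x / f₀ x = f₁ (t 0) / f₀ (t 0) := fun x hx => by
      rw [div_eq_div_iff (hf₀pos x hx).ne' (hf₀pos _ (htmem 0)).ne']
      exact mul_eq_mul_of_nodes_eq hτ hB₀ hB₁ x
    have hend := hmono (left_mem_Icc.2 hab.le) (right_mem_Icc.2 hab.le) hab
    simp only [hratio _ (left_mem_Icc.2 hab.le), hratio _ (right_mem_Icc.2 hab.le)] at hend
    exact lt_irrefl _ hend
  exact exists_castSucc_lt_succ (G := fun k => f₁ (t k) / f₀ (t k)) (hmono (htmem 0) (htmem _) hlt)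

namespace IsBernsteinBasisOfD

variable {a b : ℝ} {n : ℕ} {f₀ : ℝ → ℝ} {U : Submodule ℝ (ℝ → ℝ)} {q : Fin n → ℝ → ℝ}

theorem exists_deriv_div_eq_sum (hq : IsBernsteinBasisOfD a b n f₀ U q) {f : ℝ → ℝ}
    (hf : f ∈ U) : ∃ c : Fin n → ℝ, deriv (fun y => f y / f₀ y) = fun y => ∑ j, c j * q j y := by
  obtain ⟨c, hc⟩ := (Submodule.mem_span_range_iff_exists_fun ℝ).1 (hq.2.1 f hf)
  exact ⟨c, by rw [← hc]; ext y; simp⟩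

theorem contDiffAt (hq : IsBernsteinBasisOfD a b n f₀ U q)
    (hU : ∀ f ∈ U, ContDiff ℝ (n : ℕ∞) f) (hf₀U : f₀ ∈ U) {x : ℝ} (hx : f₀ x ≠ 0) (j : Fin n) :
    ContDiffAt ℝ (n - 1 : ℕ) (q j) x := by
  obtain ⟨f, hfU, hqj⟩ := hq.1 j
  rw [hqj]
  have hn : n - 1 + 1 = n := Nat.sub_add_cancel j.pos
  exact ((hU f hfU).contDiffAt.div (hU f₀ hf₀U).contDiffAt hx).derivWithin
    (by norm_cast; rw [hn])

theorem hasDistinctZeroOrdersAt_left (hq : IsBernsteinBasisOfD a b n f₀ U q)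
    (hU : ∀ f ∈ U, ContDiff ℝ (n : ℕ∞) f) (hf₀U : f₀ ∈ U) (ha : f₀ a ≠ 0) :
    HasDistinctZeroOrdersAt q Fin.val a where
  injective := Fin.val_injective
  hasZeroOfOrder j := ⟨(hq.2.2.2 j).1, (hq.2.2.2 j).2.1⟩
  contDiffAt i j :=
    (hq.contDiffAt hU hf₀U ha j).of_le (by exact_mod_cast (by omega : (i : ℕ) ≤ n - 1))

theorem hasDistinctZeroOrdersAt_right (hq : IsBernsteinBasisOfD a b n f₀ U q)
    (hU : ∀ f ∈ U, ContDiff ℝ (n : ℕ∞) f) (hf₀U : f₀ ∈ U) (hb : f₀ b ≠ 0) :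
    HasDistinctZeroOrdersAt q (fun j => n - 1 - j) b where
  injective i j h := Fin.ext (by simp only at h; omega)
  hasZeroOfOrder j := ⟨(hq.2.2.2 j).2.2.1, (hq.2.2.2 j).2.2.2⟩
  contDiffAt i j := (hq.contDiffAt hU hf₀U hb j).of_le (by exact_mod_cast Nat.sub_le (n - 1) i)

theorem coeff_eq_zero_of_ne (hq : IsBernsteinBasisOfD a b n f₀ U q)
    (hU : ∀ f ∈ U, ContDiff ℝ (n : ℕ∞) f) (hf₀U : f₀ ∈ U) (ha : f₀ a ≠ 0) (hb : f₀ b ≠ 0)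
    {f : ℝ → ℝ} (hf : f ∈ U) {k : Fin (n + 1)} (hfa : ∀ i < (k : ℕ), iteratedDeriv i f a = 0)
    (hfb : ∀ i < n - (k : ℕ), iteratedDeriv i f b = 0) {c : Fin n → ℝ}
    (hd : deriv (fun y => f y / f₀ y) = fun y => ∑ j, c j * q j y) {j : Fin n}
    (hk : k ≠ j.castSucc) (hk' : k ≠ j.succ) : c j = 0 := by
  have hsmooth {m : ℕ} (hm : m ≤ n) {g : ℝ → ℝ} (hg : g ∈ U) (x : ℝ) : ContDiffAt ℝ m g x :=
    ((hU g hg).of_le (by exact_mod_cast hm)).contDiffAt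
  rw [Ne, Fin.ext_iff, Fin.val_castSucc] at hk
  rw [Ne, Fin.ext_iff, Fin.val_succ] at hk'
  rcases lt_or_gt_of_ne hk with hlt | hgt
  · exact (hq.hasDistinctZeroOrdersAt_right hU hf₀U hb).coeff_eq_zero_of_deriv_div
      (hsmooth (by omega) hf b) (hsmooth (by omega) hf₀U b) hb hfb hd j (by omega)
  · exact (hq.hasDistinctZeroOrdersAt_left hU hf₀U ha).coeff_eq_zero_of_deriv_div
      (hsmooth k.is_le hf a) (hsmooth k.is_le hf₀U a) ha hfa hd j (by omega)

theorem coeff_pos (hq : IsBernsteinBasisOfD a b n f₀ U q)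
    (hU : ∀ f ∈ U, ContDiff ℝ (n : ℕ∞) f) (hf₀U : f₀ ∈ U) (hab : a < b)
    (hf₀pos : ∀ x ∈ Icc a b, 0 < f₀ x) (hqpos : ∀ j, ∀ x ∈ Ioo a b, 0 < q j x)
    {f : ℝ → ℝ} (hf : f ∈ U) (hfnn : ∀ x ∈ Icc a b, 0 ≤ f x) {j : Fin n}
    (hfa : HasZeroOfOrder f (j + 1) a) {c : Fin n → ℝ}
    (hd : deriv (fun y => f y / f₀ y) = fun y => ∑ j, c j * q j y) : 0 < c j := by
  have ha := (hf₀pos a (left_mem_Icc.2 hab.le)).ne'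
  have hsmooth {g : ℝ → ℝ} (hg : g ∈ U) : ContDiffAt ℝ (j + 1 : ℕ) g a :=
    ((hU g hg).of_le (by exact_mod_cast j.isLt)).contDiffAt
  refine (hq.hasDistinctZeroOrdersAt_left hU hf₀U ha).coeff_pos_of_deriv_div (hsmooth hf)
    (hsmooth hf₀U) ha hfa ?_ ?_ hd
  · refine eventually_of_mem (Ioo_mem_nhdsGT hab) fun y hy => ?_
    have hy' := Ioo_subset_Icc_self hy
    exact div_nonneg (hfnn y hy') (hf₀pos y hy').le
  · exact eventually_of_mem (Ioo_mem_nhdsGT hab) fun y hy => (hqpos j y hy).le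

theorem vecMul_eq_zero_of_sum_eq {κ : Type*} [Fintype κ] (hq : IsBernsteinBasisOfD a b n f₀ U q)
    (hU : ∀ f ∈ U, ContDiff ℝ (n : ℕ∞) f) (hf₀U : f₀ ∈ U) (hn : n ≠ 0) (ha : f₀ a ≠ 0)
    {p : κ → ℝ → ℝ} (hpU : ∀ k, p k ∈ U) {c : κ → ℝ} (hB₀ : ∀ x, ∑ k, c k * p k x = f₀ x)
    {d : Matrix κ (Fin n) ℝ}
    (hd : ∀ k, deriv (fun y => p k y / f₀ y) = fun y => ∑ j, d k j * q j y) :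
    c ᵥ* d = 0 := by
  refine (hq.hasDistinctZeroOrdersAt_left hU hf₀U ha).coeff_eq_zero_of_eventuallyEq_zero ?_
  have hcont := (hU f₀ hf₀U).continuous
  filter_upwards [hcont.continuousAt.eventually_ne ha] with y hy
  rw [← deriv_div_eq_sum_vecMul hB₀
      (fun k => differentiableAt_div_of_contDiff hn (hU _ (hpU k)) (hU f₀ hf₀U) hy) hd,
    deriv_div_self_eq_zero hcont.continuousAt hy, Pi.zero_apply]

end IsBernsteinBasisOfD

theorem deriv_ratio_pos_of_monotone_nodes_general
    (n : ℕ) (a b : ℝ) (hab : a < b)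
    (U : Submodule ℝ (ℝ → ℝ))
    (hUsmooth : ∀ f ∈ U, ContDiff ℝ (n : ℕ∞) f)
    (p : Fin (n + 1) → ℝ → ℝ)
    (hp : IsBernsteinBasisOf a b n U p)
    (hpnn : ∀ k, ∀ x ∈ Set.Icc a b, 0 ≤ p k x)
    (f₀ f₁ : ℝ → ℝ) (hf₀U : f₀ ∈ U)
    (hf₀pos : ∀ x ∈ Set.Icc a b, 0 < f₀ x)
    (q : Fin n → ℝ → ℝ)
    (hq : IsBernsteinBasisOfD a b n f₀ U q)
    (hqpos : ∀ k, ∀ x ∈ Set.Ioo a b, 0 < q k x)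
    (hmono : StrictMonoOn (fun x => f₁ x / f₀ x) (Set.Icc a b))
    (t : Fin (n + 1) → ℝ) (α : Fin (n + 1) → ℝ)
    (ht : Monotone t) (htmem : ∀ k, t k ∈ Set.Icc a b) (hα : ∀ k, 0 < α k)
    (hB₀ : ∀ x, ∑ k, f₀ (t k) * α k * p k x = f₀ x)
    (hB₁ : ∀ x, ∑ k, f₁ (t k) * α k * p k x = f₁ x) :
    ∀ x ∈ Set.Ioo a b, 0 < deriv (fun y => f₁ y / f₀ y) x := by
  obtain ⟨j₀, hj₀⟩ := exists_ratio_castSucc_lt_succ hab hf₀pos hmono ht htmem hB₀ hB₁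
  have hn : n ≠ 0 := j₀.pos.ne'
  have ha := (hf₀pos a (left_mem_Icc.2 hab.le)).ne'
  have hb := (hf₀pos b (right_mem_Icc.2 hab.le)).ne'
  choose d hd using fun k => hq.exists_deriv_div_eq_sum (hp.1 k)
  have hbidiag : ∀ k j, k ≠ j.castSucc → k ≠ j.succ → d k j = 0 := fun k _ =>
    hq.coeff_eq_zero_of_ne hUsmooth hf₀U ha hb (hp.1 k) (hp.2.2.2 k).1 (hp.2.2.2 k).2.2.1 (hd k)
  have hw j : 0 < f₀ (t j.succ) * α j.succ * d j.succ j :=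
    mul_pos (mul_pos (hf₀pos _ (htmem _)) (hα _)) (hq.coeff_pos hUsmooth hf₀U hab hf₀pos hqpos
      (hp.1 _) (hpnn _) ⟨(hp.2.2.2 j.succ).1, (hp.2.2.2 j.succ).2.1⟩ (hd j.succ))
  intro x hx
  rw [deriv_ratio_eq_sum_of_bidiagonal hbidiag (fun k => (hf₀pos _ (htmem k)).ne') hB₁
    (fun k => differentiableAt_div_of_contDiff hn (hUsmooth _ (hp.1 k)) (hUsmooth f₀ hf₀U)
      (hf₀pos x (Ioo_subset_Icc_self hx)).ne') hd
    (hq.vecMul_eq_zero_of_sum_eq hUsmooth hf₀U hn ha hp.1 hB₀ hd)]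
  refine Finset.sum_pos' (fun j _ => mul_nonneg (mul_nonneg ?_ (hw j).le) (hqpos j x hx).le)
    ⟨j₀, Finset.mem_univ _, mul_pos (mul_pos (sub_pos.2 hj₀) (hw j₀)) (hqpos j₀ x hx)⟩
  exact sub_nonneg.2 (hmono.monotoneOn (htmem _) (htmem _) (ht (Fin.castSucc_le_succ _)))

/-- Corollary: if a generalized Bernstein operator with non-decreasing nodes fixing `f₀` and
`f₁` exists, then `(f₁/f₀)' > 0` on the open interval `(a,b)`. -/
theorem deriv_ratio_pos_of_monotone_nodes
    (n : ℕ) (a b : ℝ) (hab : a < b)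
    (U : Submodule ℝ (ℝ → ℝ))
    (hUdim : Module.finrank ℝ ↥U = n + 1)
    (hUsmooth : ∀ f ∈ U, ContDiff ℝ (n : ℕ∞) f)
    (p : Fin (n + 1) → ℝ → ℝ)
    (hp : IsBernsteinBasisOf a b n U p)
    (hpnn : ∀ k, ∀ x ∈ Set.Icc a b, 0 ≤ p k x)
    (f₀ f₁ : ℝ → ℝ) (hf₀U : f₀ ∈ U) (hf₁U : f₁ ∈ U)
    (hf₀pos : ∀ x ∈ Set.Icc a b, 0 < f₀ x)
    (q : Fin n → ℝ → ℝ)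
    (hq : IsBernsteinBasisOfD a b n f₀ U q)
    (hqpos : ∀ k, ∀ x ∈ Set.Ioo a b, 0 < q k x)
    (hmono : StrictMonoOn (fun x => f₁ x / f₀ x) (Set.Icc a b))
    (t : Fin (n + 1) → ℝ) (α : Fin (n + 1) → ℝ)
    (ht : Monotone t) (htmem : ∀ k, t k ∈ Set.Icc a b) (hα : ∀ k, 0 < α k)
    (hB₀ : ∀ x, ∑ k, f₀ (t k) * α k * p k x = f₀ x)
    (hB₁ : ∀ x, ∑ k, f₁ (t k) * α k * p k x = f₁ x) :
    ∀ x ∈ Set.Ioo a b, 0 < deriv (fun y => f₁ y / f₀ y) x :=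
  deriv_ratio_pos_of_monotone_nodes_general n a b hab U hUsmooth p hp hpnn f₀ f₁ hf₀U hf₀pos q hq
    hqpos hmono t α ht htmem hα hB₀ hB₁
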